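/- arXiv:1111.4074 — 2 statements merged into one kernel-verified Lean document; each statement's English description precedes it below -/
import Mathlib

section
/- Let σ : [0,∞) → [0,∞) be smooth with σ(0)=0, σ'(0)=1, σ > 0 on (0,∞), and σ' ≥ 0 (so σ is nondecreasing). If n ≥ m ≥ 1 then for all 0 ≤ r ≤ R, ∫_r^R (∫₀^t σ(s)^{n-1} ds)/σ(t)^{n-1} dt ≤ ∫_r^R (∫₀^t σ(s)^{m-1} ds)/σ(t)^{m-1} dt. -/
open MeasureTheory Set intervalIntegral

/-- Key pointwise inequality. -/
lemma mean_exit_key (σ : ℝ → ℝ) (hc : Continuous σ) (hmono : Monotone σ)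
    (hσ0 : σ 0 = 0) (hσpos : ∀ t > 0, 0 < σ t) (a b : ℕ) (hab : a ≤ b)
    (t : ℝ) (ht : 0 ≤ t) :
    (∫ s in (0:ℝ)..t, σ s ^ b) / σ t ^ b ≤ (∫ s in (0:ℝ)..t, σ s ^ a) / σ t ^ a := by
  rcases eq_or_lt_of_le ht with h0 | h0
  · simp [← h0]
  · have hσt : 0 < σ t := hσpos t h0
    rw [div_le_div_iff₀ (pow_pos hσt b) (pow_pos hσt a)]
    rw [← intervalIntegral.integral_mul_const, ← intervalIntegral.integral_mul_const]
    apply intervalIntegral.integral_mono_on h0.le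
    · exact ((hc.pow b).mul continuous_const).intervalIntegrable _ _
    · exact ((hc.pow a).mul continuous_const).intervalIntegrable _ _
    · intro s hs
      have hs0 : 0 ≤ σ s := hσ0 ▸ hmono hs.1
      have hst : σ s ≤ σ t := hmono hs.2
      calc σ s ^ b * σ t ^ a = σ s ^ a * σ s ^ (b - a) * σ t ^ a := by
            rw [← pow_add, Nat.add_sub_cancel' hab]
        _ ≤ σ s ^ a * σ t ^ (b - a) * σ t ^ a := by
            exact mul_le_mul_of_nonneg_right
              (mul_le_mul_of_nonneg_left (pow_le_pow_left₀ hs0 hst (b - a))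
                (pow_nonneg hs0 a)) (pow_nonneg (hs0.trans hst) a)
        _ = σ s ^ a * (σ t ^ (b - a) * σ t ^ a) := by ring
        _ = σ s ^ a * σ t ^ b := by rw [← pow_add, Nat.sub_add_cancel hab]

/-- Integrability of the integrand. -/
lemma mean_exit_integrable (σ : ℝ → ℝ) (hc : Continuous σ) (hmono : Monotone σ)
    (hσ0 : σ 0 = 0) (hσpos : ∀ t > 0, 0 < σ t) (k : ℕ) (r R : ℝ) (hr : 0 ≤ r) (hrR : r ≤ R) :
    IntervalIntegrable (fun t => (∫ s in (0:ℝ)..t, σ s ^ k) / σ t ^ k) volume r R := by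
  have hnum : Continuous fun t => ∫ s in (0:ℝ)..t, σ s ^ k :=
    intervalIntegral.continuous_primitive (fun a b => (hc.pow k).intervalIntegrable a b) 0
  have hmeas : AEStronglyMeasurable (fun t => (∫ s in (0:ℝ)..t, σ s ^ k) / σ t ^ k)
      (volume.restrict (Set.uIoc r R)) :=
    (hnum.measurable.div ((hc.pow k).measurable)).aestronglyMeasurable
  refine (_root_.intervalIntegrable_const (c := R)).mono_fun hmeas ?_
  refine (ae_restrict_iff' measurableSet_uIoc).2 (Filter.Eventually.of_forall fun t ht => ?_)
  rw [uIoc_of_le hrR] at ht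
  have ht0 : 0 ≤ t := hr.trans ht.1.le
  have hbound : (∫ s in (0:ℝ)..t, σ s ^ k) / σ t ^ k ≤ t := by
    rcases eq_or_lt_of_le ht0 with h0 | h0
    · simp [← h0]
    · have hs0 : ∀ s ∈ Icc (0:ℝ) t, 0 ≤ σ s := fun s hs => hσ0 ▸ hmono hs.1
      have hσt : 0 < σ t ^ k := pow_pos (hσpos t h0) k
      rw [div_le_iff₀ hσt]
      calc (∫ s in (0:ℝ)..t, σ s ^ k) ≤ ∫ s in (0:ℝ)..t, σ t ^ k := by
            apply intervalIntegral.integral_mono_on h0.le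
              ((hc.pow k).intervalIntegrable _ _) (_root_.intervalIntegrable_const)
            exact fun s hs => pow_le_pow_left₀ (hs0 s hs) (hmono hs.2) k
        _ = t * σ t ^ k := by simp
  have hnn : 0 ≤ (∫ s in (0:ℝ)..t, σ s ^ k) / σ t ^ k := by
    apply div_nonneg _ (pow_nonneg (hσ0 ▸ hmono ht0) k)
    apply intervalIntegral.integral_nonneg ht0
    exact fun s hs => pow_nonneg (hσ0 ▸ hmono hs.1) k
  simp only [Real.norm_eq_abs, abs_of_nonneg hnn, abs_of_nonneg (hr.trans hrR)]
  exact hbound.trans ht.2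

/-- Monotonicity in the dimension of the mean exit time integrand for a
nondecreasing warping function. -/
theorem mean_exit_integrand_dimension_monotone (σ : ℝ → ℝ)
    (hσs : ContDiff ℝ (⊤ : ℕ∞) σ) (hσ0 : σ 0 = 0) (hσ'0 : deriv σ 0 = 1)
    (hσpos : ∀ t > 0, 0 < σ t) (hσ' : ∀ t, 0 ≤ deriv σ t)
    (m n : ℕ) (hm : 1 ≤ m) (hmn : m ≤ n)
    (r R : ℝ) (hr : 0 ≤ r) (hrR : r ≤ R) :
    ∫ t in r..R, (∫ s in (0:ℝ)..t, σ s ^ (n - 1)) / σ t ^ (n - 1)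
      ≤ ∫ t in r..R, (∫ s in (0:ℝ)..t, σ s ^ (m - 1)) / σ t ^ (m - 1) := by
  have hc : Continuous σ := hσs.continuous
  have hmono : Monotone σ := monotone_of_deriv_nonneg (hσs.differentiable (by simp)) hσ'
  apply intervalIntegral.integral_mono_on hrR
    (mean_exit_integrable σ hc hmono hσ0 hσpos _ r R hr hrR)
    (mean_exit_integrable σ hc hmono hσ0 hσpos _ r R hr hrR)
  intro t ht
  exact mean_exit_key σ hc hmono hσ0 hσpos (m - 1) (n - 1)
    (Nat.sub_le_sub_right hmn 1) t (hr.trans ht.1)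
end

section
/- Let σ be as above with sup v₀ = V < ∞ where v₀(r)=∫₀^r σ(t)^{-1}∫₀^t σ(s)ds dt, and suppose σ(r)² > 2V. Then for θ ∈ [-π/4, π/4], the function v(r,θ) = v₀(r) cos θ satisfies Δv(r,θ) = cos θ · (Δv₀(r)) − σ(r)^{-2} v₀(r) cos θ ≥ cos θ (1 − 1/2) ≥ √2/4, where Δ is the Laplacian of the metric dr² + σ(r)² dθ², i.e. Δu = u_rr + (σ'/σ) u_r + σ^{-2} u_θθ. -/
open Set Real

lemma sqrt_two_div_two_le_cos_of_mem_Icc {θ : ℝ} (hθ : θ ∈ Icc (-(π / 4)) (π / 4)) :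
    √2 / 2 ≤ cos θ := by
  rw [← cos_pi_div_four, ← cos_abs θ]
  exact cos_le_cos_of_nonneg_of_le_pi (abs_nonneg θ) (by linarith [pi_pos])
    (abs_le.mpr hθ)

/-- For `s = 0` the left side is the junk value `0⁻¹ * v = 0`. -/
lemma inv_mul_lt_half_of_two_mul_lt {s v : ℝ} (hs : 0 ≤ s) (h : 2 * v < s) :
    s⁻¹ * v < 1 / 2 := by
  rcases hs.eq_or_lt with rfl | hs
  · simp
  · rw [inv_mul_lt_iff₀ hs]
    linarith

theorem anisotropic_laplacian_lower_bound_general (σ v₀ : ℝ → ℝ) (V r θ : ℝ)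
    (hv : ∀ s ≥ (0:ℝ), v₀ s ≤ V) (hr : 0 ≤ r)
    (hσ2 : 2 * V < σ r ^ 2)
    (hΔv₀ : deriv (deriv v₀) r + (deriv σ r / σ r) * deriv v₀ r = 1)
    (hθ : θ ∈ Icc (-(π / 4)) (π / 4)) :
    Real.sqrt 2 / 4 ≤
      (deriv (deriv v₀) r + (deriv σ r / σ r) * deriv v₀ r) * Real.cos θ
        - (σ r ^ 2)⁻¹ * v₀ r * Real.cos θ := by
  have hcos := sqrt_two_div_two_le_cos_of_mem_Icc hθ
  have hq : (σ r ^ 2)⁻¹ * v₀ r < 1 / 2 :=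
    inv_mul_lt_half_of_two_mul_lt (sq_nonneg _) (by linarith [hv r hr])
  calc √2 / 4 = (1 / 2) * (√2 / 2) := by ring
    _ ≤ (1 - (σ r ^ 2)⁻¹ * v₀ r) * cos θ :=
        mul_le_mul (by linarith) hcos (by positivity) (by linarith)
    _ = _ := by rw [hΔv₀]; ring

/-- On the region where `σ(r)² > 2 sup v₀` and `|θ| ≤ π/4`, the function
`v(r,θ) = v₀(r) cos θ` has Laplacian
`Δv = (Δv₀) cos θ − σ^{-2} v₀ cos θ` bounded below by `√2/4`. -/
theorem anisotropic_laplacian_lower_bound (σ v₀ : ℝ → ℝ) (V r θ : ℝ)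
    (hv : ∀ s ≥ (0:ℝ), v₀ s ≤ V) (hv0 : 0 ≤ v₀ r) (hr : 0 ≤ r)
    (hσ2 : 2 * V < σ r ^ 2)
    (hΔv₀ : deriv (deriv v₀) r + (deriv σ r / σ r) * deriv v₀ r = 1)
    (hθ : θ ∈ Icc (-(π / 4)) (π / 4)) :
    Real.sqrt 2 / 4 ≤
      (deriv (deriv v₀) r + (deriv σ r / σ r) * deriv v₀ r) * Real.cos θ
        - (σ r ^ 2)⁻¹ * v₀ r * Real.cos θ :=
  anisotropic_laplacian_lower_bound_general σ v₀ V r θ hv hr hσ2 hΔv₀ hθ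
end
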